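/- Suppose G contains no complete subgraph on 4 vertices (so v_k = 0 for k ≥ 3), its Betti numbers satisfy b_0 = 1, b_1 = 0 and b_2 = 1 (as for a triangulation of the 2-sphere), and the number of edges v_1 is even. Then the Dirac complexity of G is positive. -/

import Mathlib

/-!
The grading `γ = (-1)^dim` anticommutes with `D = d + d*`, so the spectrum of `D` is symmetric
about `0` and the product of its nonzero eigenvalues has sign `(-1)^(rank D / 2)`. Since `d² = 0`,
`rank D = 2 rank d`; without `K_4` the only pieces of `d` are `d_0` and `d_1`, and exactness at the
edges (`b_1 = 0`) gives `rank d_0 + rank d_1 = v_1`. Hence the sign is `(-1)^(v_1) = 1`.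
-/

open Matrix Finset BigOperators

variable {V : Type*} [Fintype V] [LinearOrder V]

/-- Incidence coefficient between finsets `t` and `s`: it is `(-1)^i` if `s` is obtained from `t`
by deleting its `i`-th vertex (in the linear order on vertices), and `0` otherwise. This encodes
the exterior derivative `(d f)(x_0,…,x_{k+1}) = ∑ i (−1)^i f(x_0,…,x̂_i,…,x_{k+1})` on simplices
whose vertices are ordered increasingly. -/
def dEntry (t s : Finset V) : ℝ :=
  ∑ v ∈ t, if s = t.erase v then (-1 : ℝ) ^ (t.filter (· < v)).card else 0

variable (G : SimpleGraph V) [DecidableRel G.Adj]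

/-- The set `𝒢_k` of `k`-simplices of `G`, i.e. the complete subgraphs on `k+1` vertices,
encoded as the `(k+1)`-cliques of `G`.  `Ω_k = Cl G k → ℝ` is the space of `k`-forms. -/
abbrev Cl (k : ℕ) := {s : Finset V // s ∈ G.cliqueFinset (k + 1)}

/-- The set `𝒢` of all simplices (nonempty complete subgraphs) of `G`; the total space of forms
is `Ω = ⊕_k Ω_k = Simp G → ℝ`. -/
abbrev Simp := {s : Finset V // s.Nonempty ∧ s ∈ G.cliqueFinset s.card}

/-- The exterior derivative `d_k : Ω_k → Ω_{k+1}` as a matrix (its transpose is `d_k^*`). -/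
def dMat (k : ℕ) : Matrix (Cl G (k + 1)) (Cl G k) ℝ := fun t s => dEntry t.1 s.1

/-- The Laplace–Beltrami block `L_p = d_p^* d_p + d_{p-1} d_{p-1}^*` on `Ω_p` (with `d_{-1} = 0`). -/
def Lmat : (p : ℕ) → Matrix (Cl G p) (Cl G p) ℝ
  | 0 => (dMat G 0)ᵀ * dMat G 0
  | (k + 1) => (dMat G (k + 1))ᵀ * dMat G (k + 1) + dMat G k * (dMat G k)ᵀ

/-- The total exterior derivative `d = ⊕_k d_k` on `Ω`, as a matrix on the simplex set. -/
def dTot : Matrix (Simp G) (Simp G) ℝ := fun t s => dEntry t.1 s.1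

/-- The Dirac operator `D = d + d^*` of `G`, as a symmetric matrix on the simplex set. -/
def Dmat : Matrix (Simp G) (Simp G) ℝ := dTot G + (dTot G)ᵀ

/-- The Euler characteristic `χ(G) = ∑_k (−1)^k v_k = ∑_{x ∈ 𝒢} (−1)^{dim x}`. -/
def chi : ℤ := ∑ s : Simp G, (-1) ^ (s.1.card - 1)

/-- The supertrace `str(A) = tr(γ A)` where `γ` acts by `(−1)^k` on `Ω_k`. -/
def str {R : Type*} [CommRing R] (A : Matrix (Simp G) (Simp G) R) : R :=
  ∑ s : Simp G, (-1) ^ (s.1.card - 1) * A s s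

/-- The `k`-th Betti number `b_k = dim ker d_k − rank d_{k−1}` (with `d_{−1} = 0`). -/
noncomputable def betti : ℕ → ℕ
  | 0 => Module.finrank ℝ (LinearMap.ker (dMat G 0).mulVecLin)
  | (k + 1) => Module.finrank ℝ (LinearMap.ker (dMat G (k + 1)).mulVecLin) - (dMat G k).rank

theorem Finset.prod_pos_of_even_card_filter_neg {ι R : Type*} [CommRing R] [LinearOrder R]
    [IsStrictOrderedRing R] {s : Finset ι} {f : ι → R} (hf : ∀ i ∈ s, f i ≠ 0)
    (heven : Even #{i ∈ s | f i < 0}) : 0 < ∏ i ∈ s, f i := by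
  rw [← prod_filter_mul_prod_filter_not s (fun i => f i < 0)]
  refine mul_pos ?_ (prod_pos fun i hi => ?_)
  · calc (0 : R) < ∏ i ∈ s with f i < 0, -f i :=
          prod_pos fun i hi => neg_pos.mpr (mem_filter.mp hi).2
      _ = ∏ i ∈ s with f i < 0, f i := by rw [prod_neg, heven.neg_one_pow, one_mul]
  · obtain ⟨his, hnonneg⟩ := mem_filter.mp hi
    exact lt_of_le_of_ne (not_lt.mp hnonneg) (hf i his).symm

namespace Matrix

variable {l m n o R : Type*} [Fintype m] [Fintype n]

theorem rank_mul_mul_eq_of_mul_eq_one [CommRing R] [StrongRankCondition R] [Fintype l]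
    [Fintype o] [DecidableEq m] [DecidableEq n] {P : Matrix l m R} {P' : Matrix m l R}
    {Q : Matrix n o R} {Q' : Matrix o n R} (hP : P' * P = 1) (hQ : Q * Q' = 1)
    (A : Matrix m n R) : (P * A * Q).rank = A.rank := by
  refine le_antisymm ((rank_mul_le_left _ _).trans (rank_mul_le_right _ _)) ?_
  calc A.rank = (P' * (P * A * Q) * Q').rank := by
        rw [show P' * (P * A * Q) * Q' = P' * P * A * (Q * Q') by simp only [Matrix.mul_assoc],
          hP, hQ, Matrix.one_mul, Matrix.mul_one]
    _ ≤ (P * A * Q).rank := (rank_mul_le_left _ _).trans (rank_mul_le_right _ _)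

section Field

variable [Field R]

theorem rank_add_eq_of_mul_eq {A B : Matrix m n R} {P : Matrix m m R} {Q : Matrix n n R}
    (hPA : P * A = A) (hPB : P * B = 0) (hAQ : A * Q = A) (hBQ : B * Q = 0) :
    (A + B).rank = A.rank + B.rank := by
  have hrange : LinearMap.range (A + B).mulVecLin
      = LinearMap.range A.mulVecLin ⊔ LinearMap.range B.mulVecLin := by
    refine le_antisymm ?_ (sup_le ?_ ?_)
    · rw [mulVecLin_add]; exact LinearMap.range_add_le _ _
    · rintro _ ⟨x, rfl⟩
      exact ⟨Q *ᵥ x, by simp [mulVec_mulVec, hAQ, hBQ]⟩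
    · rintro _ ⟨x, rfl⟩
      exact ⟨x - Q *ᵥ x, by simp [mulVec_sub, mulVec_mulVec, hAQ, hBQ]⟩
  have hdisj : LinearMap.range A.mulVecLin ⊓ LinearMap.range B.mulVecLin = ⊥ := by
    rw [Submodule.eq_bot_iff]
    rintro _ ⟨⟨x, rfl⟩, ⟨z, hz⟩⟩
    simp only [mulVecLin_apply] at hz ⊢
    rw [← hPA, ← mulVec_mulVec, ← hz, mulVec_mulVec, hPB, zero_mulVec]
  have hdim := Submodule.finrank_sup_add_finrank_inf_eq (LinearMap.range A.mulVecLin)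
    (LinearMap.range B.mulVecLin)
  rw [hdisj, finrank_bot, add_zero] at hdim
  rw [rank, hrange, hdim, rank, rank]

theorem rank_add_rank_eq_card_of_mul_eq_zero [Fintype l] {A : Matrix l m R} {B : Matrix m n R}
    (hAB : A * B = 0) (hker : Module.finrank R (LinearMap.ker A.mulVecLin) ≤ B.rank) :
    A.rank + B.rank = Fintype.card m := by
  have := LinearMap.finrank_range_add_finrank_ker A.mulVecLin
  rw [Module.finrank_fintype_fun_eq_card] at this
  exact le_antisymm (rank_add_rank_le_card_of_mul_eq_zero hAB) (by rw [rank]; omega)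

end Field

section SquareZero

variable [Field R] [LinearOrder R] [IsStrictOrderedRing R] {A : Matrix n n R}

theorem mulVec_transpose_eq_zero_of_mulVec_mulVec {x : n → R} (hx : A *ᵥ (Aᵀ *ᵥ x) = 0) :
    Aᵀ *ᵥ x = 0 := by
  have hx' : x ∈ LinearMap.ker (Aᵀᵀ * Aᵀ).mulVecLin := by
    rwa [transpose_transpose, LinearMap.mem_ker, mulVecLin_apply, ← mulVec_mulVec]
  rwa [ker_mulVecLin_transpose_mul_self, LinearMap.mem_ker] at hx'

theorem ker_mulVecLin_add_transpose (hA : A * A = 0) :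
    LinearMap.ker (A + Aᵀ).mulVecLin
      = LinearMap.ker A.mulVecLin ⊓ LinearMap.ker Aᵀ.mulVecLin := by
  refine le_antisymm (fun x hx => ?_) (fun x ⟨h1, h2⟩ => ?_)
  · simp only [LinearMap.mem_ker, mulVecLin_apply, add_mulVec] at hx
    have hAt : Aᵀ *ᵥ x = 0 := mulVec_transpose_eq_zero_of_mulVec_mulVec <| by
      simpa [mulVec_add, mulVec_mulVec, hA] using congrArg (A *ᵥ ·) hx
    rw [hAt, add_zero] at hx
    exact ⟨hx, hAt⟩
  · simp_all

theorem ker_mulVecLin_sup_ker_transpose (hA : A * A = 0) :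
    LinearMap.ker A.mulVecLin ⊔ LinearMap.ker Aᵀ.mulVecLin = ⊤ := by
  have hdisj : LinearMap.ker A.mulVecLin ⊓ LinearMap.range Aᵀ.mulVecLin = ⊥ := by
    rw [Submodule.eq_bot_iff]
    rintro _ ⟨hy, ⟨x, rfl⟩⟩
    exact mulVec_transpose_eq_zero_of_mulVec_mulVec hy
  have hle : LinearMap.range Aᵀ.mulVecLin ≤ LinearMap.ker Aᵀ.mulVecLin := by
    rintro _ ⟨x, rfl⟩
    simp [hA]
  have hdim := Submodule.finrank_sup_add_finrank_inf_eq (LinearMap.ker A.mulVecLin)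
    (LinearMap.range Aᵀ.mulVecLin)
  have hrk := LinearMap.finrank_range_add_finrank_ker A.mulVecLin
  have hrkt : Module.finrank R (LinearMap.range Aᵀ.mulVecLin) = A.rank := rank_transpose A
  rw [hdisj, finrank_bot, add_zero, hrkt] at hdim
  refine top_le_iff.mp (le_trans (Submodule.eq_top_of_finrank_eq ?_).ge (sup_le_sup_left hle _))
  rw [← rank] at hrk
  omega

theorem rank_add_transpose_of_mul_self_eq_zero (hA : A * A = 0) :
    (A + Aᵀ).rank = 2 * A.rank := by
  have hdim := Submodule.finrank_sup_add_finrank_inf_eq (LinearMap.ker A.mulVecLin)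
    (LinearMap.ker Aᵀ.mulVecLin)
  rw [ker_mulVecLin_sup_ker_transpose hA, ← ker_mulVecLin_add_transpose hA, finrank_top] at hdim
  have h := LinearMap.finrank_range_add_finrank_ker A.mulVecLin
  have ht := LinearMap.finrank_range_add_finrank_ker Aᵀ.mulVecLin
  have hs := LinearMap.finrank_range_add_finrank_ker (A + Aᵀ).mulVecLin
  rw [← rank] at h ht hs
  rw [rank_transpose] at ht
  omega

end SquareZero

theorem charpoly_neg_eq_of_mul_mul_eq_neg [CommRing R] [DecidableEq n] {A P : Matrix n n R}
    (hP : P * P = 1) (hPA : P * A * P = -A) : (-A).charpoly = A.charpoly := by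
  rw [← hPA, Matrix.mul_assoc, charpoly_mul_comm, Matrix.mul_assoc, hP, Matrix.mul_one]

namespace IsHermitian

variable [DecidableEq n] {𝕜 : Type*} [RCLike 𝕜] {A : Matrix n n 𝕜}

theorem card_eigenvalues_neg_eq_card_pos (hA : A.IsHermitian)
    (hneg : (-A).charpoly = A.charpoly) :
    #{i | hA.eigenvalues i < 0} = #{i | 0 < hA.eigenvalues i} := by
  have hroots : (-A).charpoly.roots
      = Multiset.map (fun i => ((-hA.eigenvalues i : ℝ) : 𝕜)) Finset.univ.val := by
    rw [← cfc_neg_id (R := ℝ) A hA.isSelfAdjoint, hA.charpoly_cfc_eq, Polynomial.roots_prod]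
    · simp
    · exact Finset.prod_ne_zero_iff.mpr fun i _ => Polynomial.X_sub_C_ne_zero _
  rw [hneg, hA.roots_charpoly_eq_eigenvalues] at hroots
  have hmap := congrArg (Multiset.map RCLike.re) hroots
  simp only [Multiset.map_map, Function.comp_def, RCLike.ofReal_re] at hmap
  have hcount := congrArg (Multiset.countP (· < 0)) hmap
  simp only [Multiset.countP_map, neg_lt_zero] at hcount
  simpa [Finset.card_def, Finset.filter_val] using hcount

theorem prod_nonzero_eigenvalues_pos (hA : A.IsHermitian) (hneg : (-A).charpoly = A.charpoly)
    (hrank : 4 ∣ A.rank) :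
    0 < ∏ i ∈ univ.filter (fun i => hA.eigenvalues i ≠ 0), hA.eigenvalues i := by
  refine Finset.prod_pos_of_even_card_filter_neg (fun i hi => (mem_filter.mp hi).2) ?_
  have hsplit : #{i | hA.eigenvalues i ≠ 0}
      = #{i | hA.eigenvalues i < 0} + #{i | 0 < hA.eigenvalues i} := by
    rw [← card_union_of_disjoint (disjoint_filter.mpr fun i _ h => h.not_gt), ← filter_or]
    simp only [ne_iff_lt_or_gt]
  have hrk : A.rank = #{i | hA.eigenvalues i ≠ 0} := by
    rw [hA.rank_eq_card_non_zero_eigs, Fintype.card_subtype]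
  rw [filter_filter, filter_congr fun i _ => and_iff_right_of_imp LT.lt.ne]
  have := card_eigenvalues_neg_eq_card_pos hA hneg
  obtain ⟨c, hc⟩ := hrank
  exact ⟨c, by omega⟩

end IsHermitian

end Matrix

section Incidence

variable {α : Type*} [LinearOrder α] {t s : Finset α} {v : α}

theorem exists_eq_erase_of_dEntry_ne_zero (h : dEntry t s ≠ 0) : ∃ v ∈ t, s = t.erase v := by
  contrapose! h
  exact Finset.sum_eq_zero fun v hv => if_neg (h v hv)

theorem card_add_one_of_dEntry_ne_zero (h : dEntry t s ≠ 0) : s.card + 1 = t.card := by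
  obtain ⟨v, hv, rfl⟩ := exists_eq_erase_of_dEntry_ne_zero h
  exact Finset.card_erase_add_one hv

theorem dEntry_empty (s : Finset α) : dEntry ∅ s = 0 :=
  Finset.sum_empty

theorem neg_one_pow_card_mul_dEntry_mul (t s : Finset α) :
    (-1 : ℝ) ^ t.card * dEntry t s * (-1) ^ s.card = -dEntry t s := by
  by_cases h : dEntry t s = 0
  · simp [h]
  · rw [← card_add_one_of_dEntry_ne_zero h, pow_succ]
    have hsq : (-1 : ℝ) ^ (s.card * 2) = 1 := by rw [mul_comm, pow_mul, neg_one_sq, one_pow]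
    linear_combination (-dEntry t s) * hsq

theorem neg_one_pow_card_filter_erase (hv : v ∈ t) (w : α) :
    (-1 : ℝ) ^ #{u ∈ t.erase v | u < w}
      = (if v < w then -1 else 1) * (-1) ^ #{u ∈ t | u < w} := by
  rw [Finset.filter_erase]
  split_ifs with h
  · rw [← Finset.card_erase_add_one (Finset.mem_filter.mpr ⟨hv, h⟩), pow_succ]
    ring
  · rw [Finset.erase_eq_of_notMem (s := {u ∈ t | u < w}) fun hm => h (Finset.mem_filter.mp hm).2,
      one_mul]

/-- The cancellation behind `d ∘ d = 0`: removing `v` and then `w` cancels against removing `w`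
and then `v`, since exactly one of the two orders shifts the position of the second vertex. -/
theorem sum_neg_one_pow_mul_dEntry_erase (t s : Finset α) :
    ∑ v ∈ t, (-1 : ℝ) ^ #{w ∈ t | w < v} * dEntry (t.erase v) s = 0 := by
  simp only [dEntry, Finset.mul_sum]
  rw [← Finset.sum_finset_product' t.offDiag t (fun v => t.erase v)
    (fun p => by simp [Finset.mem_offDiag, and_comm, ne_comm])]
  refine Finset.sum_involution (fun p _ => p.swap) ?_ ?_ (fun p hp => ?_) (fun p _ => rfl)
  · rintro ⟨v, w⟩ hp
    obtain ⟨hv, hw, hvw⟩ := Finset.mem_offDiag.mp hp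
    simp only [Prod.swap_prod_mk, Finset.erase_right_comm (a := v)]
    split_ifs
    · rw [neg_one_pow_card_filter_erase hv, neg_one_pow_card_filter_erase hw]
      rcases hvw.lt_or_gt with h | h <;> simp [h, h.not_gt] <;> ring
    · simp
  · rintro ⟨v, w⟩ hp - h
    exact (Finset.mem_offDiag.mp hp).2.2 (Prod.ext_iff.mp h).2
  · obtain ⟨hv, hw, hvw⟩ := Finset.mem_offDiag.mp hp
    exact Finset.mem_offDiag.mpr ⟨hw, hv, hvw.symm⟩

theorem sum_dEntry_mul_dEntry {p : Finset α → Prop} [Fintype (Subtype p)]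
    (hp : ∀ v ∈ t, (t.erase v).Nonempty → p (t.erase v)) :
    ∑ u : Subtype p, dEntry t u * dEntry u s = 0 := by
  have hexpand : ∀ u : Finset α, dEntry t u * dEntry u s
      = ∑ v ∈ t, if u = t.erase v then (-1) ^ #{w ∈ t | w < v} * dEntry (t.erase v) s else 0 := by
    intro u
    rw [dEntry, Finset.sum_mul]
    refine Finset.sum_congr rfl fun v _ => ?_
    split_ifs with h
    · rw [h]
    · exact zero_mul _
  rw [← sum_neg_one_pow_mul_dEntry_erase t s]
  simp only [hexpand]
  rw [Finset.sum_comm]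
  refine Finset.sum_congr rfl fun v hv => ?_
  rcases (t.erase v).eq_empty_or_nonempty with he | he
  · simp [he, dEntry_empty]
  · simp only [← Subtype.ext_iff (a2 := ⟨t.erase v, hp v hv he⟩)]
    exact Fintype.sum_ite_eq' _ _

end Incidence

theorem dTot_mul_self : dTot G * dTot G = 0 := by
  ext t s
  exact sum_dEntry_mul_dEntry fun v hv hne =>
    ⟨hne, SimpleGraph.mem_cliqueFinset_iff.mpr
      ⟨(SimpleGraph.mem_cliqueFinset_iff.mp t.2.2).1.subset (by simp), rfl⟩⟩

theorem dMat_succ_mul_dMat (k : ℕ) : dMat G (k + 1) * dMat G k = 0 := by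
  ext t s
  exact sum_dEntry_mul_dEntry fun v hv _ => SimpleGraph.mem_cliqueFinset_iff.mpr
    ((SimpleGraph.mem_cliqueFinset_iff.mp t.2).erase_of_mem hv)

theorem charpoly_neg_Dmat : (-Dmat G).charpoly = (Dmat G).charpoly := by
  set γ : Matrix (Simp G) (Simp G) ℝ := diagonal fun s => (-1) ^ s.1.card
  refine charpoly_neg_eq_of_mul_mul_eq_neg (P := γ) ?_ ?_
  · simp [γ, diagonal_mul_diagonal, ← pow_add, ← two_mul, pow_mul]
  · ext t s
    simp only [γ, diagonal_mul, mul_diagonal, Dmat, Matrix.add_apply, transpose_apply,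
      Matrix.neg_apply, dTot]
    linear_combination neg_one_pow_card_mul_dEntry_mul t.1 s.1
      + neg_one_pow_card_mul_dEntry_mul s.1 t.1

theorem rank_Dmat : (Dmat G).rank = 2 * (dTot G).rank :=
  rank_add_transpose_of_mul_self_eq_zero (dTot_mul_self G)

theorem mem_cliqueFinset_iff_card_eq (t : Simp G) {k : ℕ} :
    t.1 ∈ G.cliqueFinset k ↔ t.1.card = k :=
  ⟨fun h => (SimpleGraph.mem_cliqueFinset_iff.mp h).2, fun h => h ▸ t.2.2⟩

theorem card_le_of_cliqueFree {n : ℕ} (h : G.CliqueFree (n + 1)) (t : Simp G) :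
    t.1.card ≤ n := by
  by_contra! hn
  exact h.mono hn t.1 (SimpleGraph.mem_cliqueFinset_iff.mp t.2.2)

def toSimp {k : ℕ} (s : Cl G k) : Simp G :=
  ⟨s.1, by
    have hcard : s.1.card = k + 1 := (SimpleGraph.mem_cliqueFinset_iff.mp s.2).2
    exact ⟨Finset.card_pos.mp (by omega), by rw [hcard]; exact s.2⟩⟩

theorem toSimp_injective (k : ℕ) : Function.Injective (toSimp G (k := k)) :=
  fun _ _ h => Subtype.ext (congrArg (fun s : Simp G => s.1) h)

/-- The extension-by-zero of `k`-forms to all forms; its transpose is the restriction. -/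
def cliqueEmbed (k : ℕ) : Matrix (Simp G) (Cl G k) ℝ :=
  (1 : Matrix (Simp G) (Simp G) ℝ).submatrix id (toSimp G)

theorem transpose_cliqueEmbed_mul_cliqueEmbed (j k : ℕ) :
    (cliqueEmbed G j)ᵀ * cliqueEmbed G k
      = (1 : Matrix (Simp G) (Simp G) ℝ).submatrix (toSimp G) (toSimp G) := by
  ext a b
  simp [cliqueEmbed, mul_apply, one_apply]

theorem transpose_cliqueEmbed_mul_self (k : ℕ) : (cliqueEmbed G k)ᵀ * cliqueEmbed G k = 1 := by
  rw [transpose_cliqueEmbed_mul_cliqueEmbed, submatrix_one _ (toSimp_injective G k)]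

theorem transpose_cliqueEmbed_mul_cliqueEmbed_mul_self {o : Type*} [Fintype o] (k : ℕ)
    (X : Matrix (Cl G k) o ℝ) : (cliqueEmbed G k)ᵀ * (cliqueEmbed G k * X) = X := by
  rw [← Matrix.mul_assoc, transpose_cliqueEmbed_mul_self, Matrix.one_mul]

theorem transpose_cliqueEmbed_mul_cliqueEmbed_mul_of_ne {o : Type*} [Fintype o] {j k : ℕ}
    (hjk : j ≠ k) (X : Matrix (Cl G k) o ℝ) :
    (cliqueEmbed G j)ᵀ * (cliqueEmbed G k * X) = 0 := by
  suffices h : (cliqueEmbed G j)ᵀ * cliqueEmbed G k = 0 by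
    rw [← Matrix.mul_assoc, h, Matrix.zero_mul]
  rw [transpose_cliqueEmbed_mul_cliqueEmbed]
  ext a b
  refine one_apply_ne fun h => hjk ?_
  have hcard := congrArg (fun s : Simp G => s.1.card) h
  simp only [toSimp, (SimpleGraph.mem_cliqueFinset_iff.mp a.2).2,
    (SimpleGraph.mem_cliqueFinset_iff.mp b.2).2] at hcard
  omega

theorem sum_cliqueEmbed_mul {k : ℕ} (t : Simp G) (f : Cl G k → ℝ) :
    ∑ a, cliqueEmbed G k t a * f a
      = if h : t.1 ∈ G.cliqueFinset (k + 1) then f ⟨t.1, h⟩ else 0 := by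
  simp only [cliqueEmbed, submatrix_apply, id, one_apply, ite_mul, one_mul, zero_mul]
  split_ifs with h
  · rw [Fintype.sum_eq_single ⟨t.1, h⟩ fun a ha => if_neg fun hta => ha (Subtype.ext ?_)]
    · exact if_pos rfl
    · simp [hta, toSimp]
  · exact Finset.sum_eq_zero fun a _ => if_neg fun hta => h (by rw [hta]; exact a.2)

theorem cliqueEmbed_mul_mul_transpose_apply {j k : ℕ} (M : Matrix (Cl G j) (Cl G k) ℝ)
    (t s : Simp G) : (cliqueEmbed G j * M * (cliqueEmbed G k)ᵀ) t s
      = if h : t.1 ∈ G.cliqueFinset (j + 1) ∧ s.1 ∈ G.cliqueFinset (k + 1) then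
          M ⟨t.1, h.1⟩ ⟨s.1, h.2⟩ else 0 := by
  simp only [mul_apply, transpose_apply, sum_cliqueEmbed_mul G t fun a => M a _]
  simp only [mul_comm _ (cliqueEmbed G k s _), sum_cliqueEmbed_mul]
  split_ifs <;> simp_all

theorem dTot_eq_of_cliqueFree (h4 : G.CliqueFree 4) :
    dTot G = cliqueEmbed G 1 * dMat G 0 * (cliqueEmbed G 0)ᵀ
      + cliqueEmbed G 2 * dMat G 1 * (cliqueEmbed G 1)ᵀ := by
  ext t s
  rw [Matrix.add_apply, cliqueEmbed_mul_mul_transpose_apply, cliqueEmbed_mul_mul_transpose_apply]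
  simp only [dMat, dTot, mem_cliqueFinset_iff_card_eq]
  by_cases h : dEntry t.1 s.1 = 0
  · simp [h]
  · have hcard := card_add_one_of_dEntry_ne_zero h
    have ht := card_le_of_cliqueFree G h4 t
    have hs := Finset.card_pos.mpr s.2.1
    rcases (by omega : s.1.card = 1 ∨ s.1.card = 2) with hs1 | hs2
    · rw [dif_pos (by omega), dif_neg (by omega), add_zero]
    · rw [dif_neg (by omega), dif_pos (by omega), zero_add]

theorem rank_dTot_of_cliqueFree (h4 : G.CliqueFree 4) :
    (dTot G).rank = (dMat G 0).rank + (dMat G 1).rank := by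
  rw [dTot_eq_of_cliqueFree G h4,
    rank_add_eq_of_mul_eq (P := cliqueEmbed G 1 * (cliqueEmbed G 1)ᵀ)
      (Q := cliqueEmbed G 0 * (cliqueEmbed G 0)ᵀ),
    rank_mul_mul_eq_of_mul_eq_one (transpose_cliqueEmbed_mul_self G 1)
      (transpose_cliqueEmbed_mul_self G 0),
    rank_mul_mul_eq_of_mul_eq_one (transpose_cliqueEmbed_mul_self G 2)
      (transpose_cliqueEmbed_mul_self G 1)]
  all_goals simp only [Matrix.mul_assoc, transpose_cliqueEmbed_mul_cliqueEmbed_mul_self,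
    transpose_cliqueEmbed_mul_cliqueEmbed_mul_of_ne G (by decide : 1 ≠ 2),
    transpose_cliqueEmbed_mul_cliqueEmbed_mul_of_ne G one_ne_zero, Matrix.mul_zero]

theorem dirac_complexity_pos_of_sphere (hD : (Dmat G).IsHermitian)
    (h4 : G.CliqueFree 4) (hb1 : betti G 1 = 0)
    (hedges : Even (G.cliqueFinset 2).card) :
    0 < ∏ i ∈ Finset.univ.filter (fun i => hD.eigenvalues i ≠ 0), hD.eigenvalues i := by
  -- `betti` subtracts in `ℕ`, so `b_1 = 0` only says `dim ker d_1 ≤ rank d_0`.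
  have hexact : (dMat G 1).rank + (dMat G 0).rank = (G.cliqueFinset 2).card := by
    rw [← Fintype.card_coe]
    exact rank_add_rank_eq_card_of_mul_eq_zero (dMat_succ_mul_dMat G 0)
      (Nat.sub_eq_zero_iff_le.mp hb1)
  obtain ⟨e, he⟩ := hedges
  refine hD.prod_nonzero_eigenvalues_pos (charpoly_neg_Dmat G) ⟨e, ?_⟩
  rw [rank_Dmat, rank_dTot_of_cliqueFree G h4]
  omega
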